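/- arXiv:2307.05789 — 2 statements merged into one kernel-verified Lean document; each statement's English description precedes it below -/
import Mathlib

section
/- Fix n ≥ 1, smooth per-batch losses E_0, …, E_{n−1} : ℝ^D → ℝ, and θ₀ ∈ ℝ^D, and let θ_n(h) be the result of n SGD steps with learning rate h starting at θ₀ using batches E_0, …, E_{n−1} in order. Let Ē = (1/n) Σ_{μ=0}^{n−1} E_μ. Then there exist C > 0 and h₀ > 0 such that for every h ∈ (0, h₀) and every solution φ : [0, n h] → ℝ^D of the full-batch gradient flow φ′(t) = −∇Ē(φ(t)) with φ(0) = θ₀, one has ‖φ(n h) − θ_n(h)‖ ≤ C h²; i.e. n SGD steps follow the gradient flow of the average loss with error of order O(h²), and the effect of the individual mini-batches appears only at higher order in h. -/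
/-- SGD iterates: `θ₀` and `θ_{μ+1} = θ_μ - h ∇E_μ(θ_μ)`. -/
noncomputable def sgdIter {D : ℕ} (E : ℕ → EuclideanSpace ℝ (Fin D) → ℝ)
    (h : ℝ) (θ₀ : EuclideanSpace ℝ (Fin D)) : ℕ → EuclideanSpace ℝ (Fin D)
  | 0 => θ₀
  | (μ + 1) => sgdIter E h θ₀ μ - h • gradient (E μ) (sgdIter E h θ₀ μ)

/-- The average loss `Ē = (1/n) ∑ E_μ`. -/
noncomputable def avgLoss {D : ℕ} (n : ℕ) (E : ℕ → EuclideanSpace ℝ (Fin D) → ℝ)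
    (θ : EuclideanSpace ℝ (Fin D)) : ℝ :=
  (1 / (n : ℝ)) * ∑ μ ∈ Finset.range n, E μ θ

section Aux

variable {D : ℕ}

lemma contDiff_gradient {f : EuclideanSpace ℝ (Fin D) → ℝ} (hf : ContDiff ℝ (⊤ : ℕ∞) f) :
    ContDiff ℝ (⊤ : ℕ∞) (fun x => gradient f x) := by
  have h1 : ContDiff ℝ (⊤ : ℕ∞) (fderiv ℝ f) := hf.fderiv_right (m := (⊤ : ℕ∞)) (by simp)
  exact ((InnerProductSpace.toDual ℝ (EuclideanSpace ℝ (Fin D))).symm.contDiff).comp h1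

lemma contDiff_avgLoss {n : ℕ} {E : ℕ → EuclideanSpace ℝ (Fin D) → ℝ}
    (hE : ∀ μ < n, ContDiff ℝ (⊤ : ℕ∞) (E μ)) : ContDiff ℝ (⊤ : ℕ∞) (avgLoss n E) := by
  unfold avgLoss
  exact contDiff_const.mul (ContDiff.sum fun μ hμ => hE μ (Finset.mem_range.1 hμ))

lemma gradient_avgLoss {n : ℕ} {E : ℕ → EuclideanSpace ℝ (Fin D) → ℝ}
    (hE : ∀ μ < n, ContDiff ℝ (⊤ : ℕ∞) (E μ)) (x : EuclideanSpace ℝ (Fin D)) :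
    gradient (avgLoss n E) x
      = (1/(n:ℝ)) • ∑ μ ∈ Finset.range n, gradient (E μ) x := by
  have hd : ∀ μ ∈ Finset.range n, HasFDerivAt (E μ) (fderiv ℝ (E μ) x) x :=
    fun μ hμ => ((hE μ (Finset.mem_range.1 hμ)).differentiable (by simp) x).hasFDerivAt
  have h1 : HasFDerivAt (avgLoss n E)
      ((1/(n:ℝ)) • ∑ μ ∈ Finset.range n, fderiv ℝ (E μ) x) x := by
    exact (HasFDerivAt.fun_sum hd).const_mul (1/(n:ℝ))
  show (InnerProductSpace.toDual ℝ _).symm (fderiv ℝ (avgLoss n E) x) = _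
  rw [h1.fderiv, map_smul, map_sum]
  rfl

lemma sgdIter_eq_sub_sum {E : ℕ → EuclideanSpace ℝ (Fin D) → ℝ} {h : ℝ}
    {θ₀ : EuclideanSpace ℝ (Fin D)} (k : ℕ) :
    sgdIter E h θ₀ k
      = θ₀ - ∑ μ ∈ Finset.range k, h • gradient (E μ) (sgdIter E h θ₀ μ) := by
  induction k with
  | zero => simp [sgdIter]
  | succ k ih =>
    rw [sgdIter, Finset.sum_range_succ, ih]
    abel

end Aux

set_option maxHeartbeats 1000000 in
/-- `n` SGD steps follow the gradient flow of the average loss `Ē` with error of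
order `O(h²)`: mini-batch effects appear only at higher order in `h`. -/
theorem sgd_follows_average_gradient_flow {D n : ℕ} (hn : 1 ≤ n)
    (E : ℕ → EuclideanSpace ℝ (Fin D) → ℝ)
    (hE : ∀ μ < n, ContDiff ℝ (⊤ : ℕ∞) (E μ))
    (θ₀ : EuclideanSpace ℝ (Fin D)) :
    ∃ C > (0 : ℝ), ∃ h₀ > (0 : ℝ), ∀ h ∈ Set.Ioo (0 : ℝ) h₀,
      ∀ φ : ℝ → EuclideanSpace ℝ (Fin D),
        φ 0 = θ₀ →
        (∀ t ∈ Set.Icc (0 : ℝ) ((n : ℝ) * h),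
          HasDerivAt φ (-(gradient (avgLoss n E) (φ t))) t) →
        ‖φ ((n : ℝ) * h) - sgdIter E h θ₀ n‖ ≤ C * h ^ 2 := by
  classical
  set G : ℕ → EuclideanSpace ℝ (Fin D) → EuclideanSpace ℝ (Fin D) :=
    fun μ x => gradient (E μ) x with hG
  set A : EuclideanSpace ℝ (Fin D) → EuclideanSpace ℝ (Fin D) :=
    fun x => gradient (avgLoss n E) x with hA
  have hnR : (0:ℝ) < n := by exact_mod_cast hn
  have hGc : ∀ μ < n, ContDiff ℝ (⊤ : ℕ∞) (G μ) := fun μ hμ => contDiff_gradient (hE μ hμ)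
  have hAc : ContDiff ℝ (⊤ : ℕ∞) A := contDiff_gradient (contDiff_avgLoss hE)
  set K : Set (EuclideanSpace ℝ (Fin D)) := Metric.closedBall θ₀ 1 with hK
  have hKc : IsCompact K := isCompact_closedBall θ₀ 1
  have hKconv : Convex ℝ K := convex_closedBall θ₀ 1
  have hθ₀K : θ₀ ∈ K := Metric.mem_closedBall_self zero_le_one
  -- a single constant bounding everything on K
  have hcont : ContinuousOn (fun x =>
      (∑ μ ∈ Finset.range n, (‖G μ x‖ + ‖fderiv ℝ (G μ) x‖))
        + ‖A x‖ + ‖fderiv ℝ A x‖) K := by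
    apply ContinuousOn.add
    apply ContinuousOn.add
    · apply continuousOn_finset_sum
      intro μ hμ
      have hμn := Finset.mem_range.1 hμ
      exact (((hGc μ hμn).continuous.norm).add
        (((hGc μ hμn).fderiv_right (m := (⊤ : ℕ∞)) (by simp)).continuous.norm)).continuousOn
    · exact hAc.continuous.norm.continuousOn
    · exact (hAc.fderiv_right (m := (⊤ : ℕ∞)) (by simp)).continuous.norm.continuousOn
  obtain ⟨B, hB⟩ := hKc.exists_bound_of_continuousOn hcont
  set Q : ℝ := |B| + 1 with hQ
  have hQpos : 0 < Q := by positivity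
  have hsum_le : ∀ x ∈ K,
      (∑ μ ∈ Finset.range n, (‖G μ x‖ + ‖fderiv ℝ (G μ) x‖))
        + ‖A x‖ + ‖fderiv ℝ A x‖ ≤ Q := by
    intro x hx
    calc _ ≤ ‖(∑ μ ∈ Finset.range n, (‖G μ x‖ + ‖fderiv ℝ (G μ) x‖))
        + ‖A x‖ + ‖fderiv ℝ A x‖‖ := le_abs_self _
    _ ≤ B := hB x hx
    _ ≤ |B| := le_abs_self B
    _ ≤ Q := by simp [hQ]
  have hsum_nonneg : ∀ x : EuclideanSpace ℝ (Fin D), (0:ℝ) ≤ ∑ μ ∈ Finset.range n, (‖G μ x‖ + ‖fderiv ℝ (G μ) x‖) :=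
    fun x => Finset.sum_nonneg fun μ _ => by positivity
  have hAle : ∀ x ∈ K, ‖A x‖ ≤ Q := by
    intro x hx
    have := hsum_le x hx
    have h1 := hsum_nonneg x
    have h2 : (0:ℝ) ≤ ‖fderiv ℝ A x‖ := norm_nonneg _
    linarith
  have hA'le : ∀ x ∈ K, ‖fderiv ℝ A x‖ ≤ Q := by
    intro x hx
    have := hsum_le x hx
    have h1 := hsum_nonneg x
    have h2 : (0:ℝ) ≤ ‖A x‖ := norm_nonneg _
    linarith
  have hGle : ∀ μ < n, ∀ x ∈ K, ‖G μ x‖ ≤ Q := by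
    intro μ hμ x hx
    have hterm : ‖G μ x‖ + ‖fderiv ℝ (G μ) x‖
        ≤ ∑ ν ∈ Finset.range n, (‖G ν x‖ + ‖fderiv ℝ (G ν) x‖) :=
      Finset.single_le_sum (f := fun ν => ‖G ν x‖ + ‖fderiv ℝ (G ν) x‖)
        (fun ν _ => by positivity) (Finset.mem_range.2 hμ)
    have := hsum_le x hx
    have h2 : (0:ℝ) ≤ ‖fderiv ℝ (G μ) x‖ := norm_nonneg _
    have h3 : (0:ℝ) ≤ ‖A x‖ := norm_nonneg _
    have h4 : (0:ℝ) ≤ ‖fderiv ℝ A x‖ := norm_nonneg _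
    linarith
  have hG'le : ∀ μ < n, ∀ x ∈ K, ‖fderiv ℝ (G μ) x‖ ≤ Q := by
    intro μ hμ x hx
    have hterm : ‖G μ x‖ + ‖fderiv ℝ (G μ) x‖
        ≤ ∑ ν ∈ Finset.range n, (‖G ν x‖ + ‖fderiv ℝ (G ν) x‖) :=
      Finset.single_le_sum (f := fun ν => ‖G ν x‖ + ‖fderiv ℝ (G ν) x‖)
        (fun ν _ => by positivity) (Finset.mem_range.2 hμ)
    have := hsum_le x hx
    have h2 : (0:ℝ) ≤ ‖G μ x‖ := norm_nonneg _
    have h3 : (0:ℝ) ≤ ‖A x‖ := norm_nonneg _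
    have h4 : (0:ℝ) ≤ ‖fderiv ℝ A x‖ := norm_nonneg _
    linarith
  -- Lipschitz-type bounds on K
  have hGlip : ∀ μ < n, ∀ x ∈ K, ∀ y ∈ K, ‖G μ y - G μ x‖ ≤ Q * ‖y - x‖ := by
    intro μ hμ x hx y hy
    exact Convex.norm_image_sub_le_of_norm_fderiv_le
      (fun z _ => ((hGc μ hμ).differentiable (by simp) z))
      (fun z hz => hG'le μ hμ z hz) hKconv hx hy
  have hAlip : ∀ x ∈ K, ∀ y ∈ K, ‖A y - A x‖ ≤ Q * ‖y - x‖ := by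
    intro x hx y hy
    exact Convex.norm_image_sub_le_of_norm_fderiv_le
      (fun z _ => (hAc.differentiable (by simp) z))
      (fun z hz => hA'le z hz) hKconv hx hy
  refine ⟨2 * Q^2 * n^2, by positivity, 1 / (n * Q), by positivity, ?_⟩
  rintro h ⟨hh0, hh1⟩ φ hφ0 hφ'
  set T : ℝ := (n : ℝ) * h with hT
  have hT0 : 0 < T := by positivity
  have hTQ : T * Q < 1 := by
    have : h * ((n:ℝ) * Q) < (1 / (n * Q)) * ((n:ℝ) * Q) := by
      apply mul_lt_mul_of_pos_right hh1; positivity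
    rw [one_div, inv_mul_cancel₀ (by positivity)] at this
    nlinarith
  set θ : ℕ → EuclideanSpace ℝ (Fin D) := sgdIter E h θ₀ with hθdef
  -- SGD iterates stay near θ₀
  have hθbound : ∀ μ ≤ n, ‖θ μ - θ₀‖ ≤ (μ : ℝ) * (h * Q) ∧ θ μ ∈ K := by
    intro μ hμ
    induction μ with
    | zero =>
      refine ⟨by simp [hθdef, sgdIter], hθ₀K⟩
    | succ μ ih =>
      obtain ⟨ihb, ihK⟩ := ih (le_trans (Nat.le_succ μ) hμ)
      have hμn : μ < n := hμ
      have hstep : θ (μ+1) = θ μ - h • G μ (θ μ) := rfl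
      have hb : ‖θ (μ+1) - θ₀‖ ≤ (μ:ℝ) * (h * Q) + h * Q := by
        rw [hstep]
        calc ‖θ μ - h • G μ (θ μ) - θ₀‖ = ‖(θ μ - θ₀) - h • G μ (θ μ)‖ := by
              congr 1; abel
        _ ≤ ‖θ μ - θ₀‖ + ‖h • G μ (θ μ)‖ := norm_sub_le _ _
        _ ≤ (μ:ℝ) * (h * Q) + h * Q := by
              apply add_le_add ihb
              rw [norm_smul, Real.norm_eq_abs, abs_of_pos hh0]
              exact mul_le_mul_of_nonneg_left (hGle μ hμn _ ihK) hh0.le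
      have hb' : ‖θ (μ+1) - θ₀‖ ≤ ((μ+1 : ℕ) : ℝ) * (h * Q) := by
        push_cast; linarith
      refine ⟨hb', ?_⟩
      rw [Metric.mem_closedBall, dist_eq_norm]
      have hle : ((μ+1 : ℕ):ℝ) * (h * Q) ≤ (n:ℝ) * (h * Q) := by
        apply mul_le_mul_of_nonneg_right _ (by positivity)
        exact_mod_cast hμ
      have : (n:ℝ) * (h * Q) = T * Q := by rw [hT]; ring
      linarith [hb']
  -- the flow stays in K
  have hφK : ∀ t ∈ Set.Icc (0:ℝ) T, φ t ∈ K := by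
    by_contra hbad
    push_neg at hbad
    obtain ⟨t₂, ht₂, ht₂K⟩ := hbad
    have ht₂n : 1 ≤ ‖φ t₂ - θ₀‖ := by
      by_contra hc
      exact ht₂K (by rw [Metric.mem_closedBall, dist_eq_norm]; linarith [lt_of_not_ge hc])
    set S : Set ℝ := {t ∈ Set.Icc (0:ℝ) T | 1 ≤ ‖φ t - θ₀‖} with hS
    have hSne : S.Nonempty := ⟨t₂, ht₂, ht₂n⟩
    have hScl : IsClosed S := by
      have hcφ : ContinuousOn (fun t => ‖φ t - θ₀‖) (Set.Icc (0:ℝ) T) := by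
        intro t ht
        exact (((hφ' t ht).continuousAt.continuousWithinAt).sub
          continuousWithinAt_const).norm
      have : S = Set.Icc (0:ℝ) T ∩ (fun t => ‖φ t - θ₀‖) ⁻¹' (Set.Ici 1) := by
        ext t; simp [hS, Set.mem_sep_iff, and_comm]
      rw [this]
      exact hcφ.preimage_isClosed_of_isClosed isClosed_Icc isClosed_Ici
    have hSbdd : BddBelow S := ⟨0, fun t ht => ht.1.1⟩
    set t₁ : ℝ := sInf S with ht₁def
    have ht₁S : t₁ ∈ S := hScl.csInf_mem hSne hSbdd
    obtain ⟨ht₁I, ht₁n⟩ := ht₁S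
    have ht₁pos : 0 < t₁ := by
      rcases lt_or_eq_of_le ht₁I.1 with h' | h'
      · exact h'
      · exfalso; rw [← h', hφ0] at ht₁n; simp at ht₁n; linarith
    have hlt : ∀ u, 0 ≤ u → u < t₁ → ‖φ u - θ₀‖ < 1 := by
      intro u hu0 hu1
      by_contra hc
      have huS : u ∈ S := ⟨⟨hu0, le_trans hu1.le ht₁I.2⟩, le_of_not_gt hc⟩
      exact absurd (csInf_le hSbdd huS) (not_le.2 hu1)
    have ht₁le : ‖φ t₁ - θ₀‖ ≤ 1 := by
      have hct : ContinuousAt (fun t => ‖φ t - θ₀‖) t₁ :=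
        (((hφ' t₁ ht₁I).continuousAt).sub continuousAt_const).norm
      have htend : Filter.Tendsto (fun t => ‖φ t - θ₀‖) (nhdsWithin t₁ (Set.Iio t₁))
          (nhds ‖φ t₁ - θ₀‖) := hct.continuousWithinAt.tendsto
      apply le_of_tendsto htend
      have hev : Set.Ioo 0 t₁ ∈ nhdsWithin t₁ (Set.Iio t₁) := by
        rw [← Set.Ioi_inter_Iio]
        exact Filter.inter_mem (mem_nhdsWithin_of_mem_nhds (Ioi_mem_nhds ht₁pos))
          self_mem_nhdsWithin
      filter_upwards [hev] with u hu
      exact (hlt u hu.1.le hu.2).le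
    have hKmem : ∀ u ∈ Set.Icc (0:ℝ) t₁, φ u ∈ K := by
      intro u hu
      rw [Metric.mem_closedBall, dist_eq_norm]
      rcases lt_or_eq_of_le hu.2 with h' | h'
      · exact (hlt u hu.1 h').le
      · rw [h']; exact ht₁le
    have hsub : Set.Icc (0:ℝ) t₁ ⊆ Set.Icc (0:ℝ) T :=
      Set.Icc_subset_Icc le_rfl ht₁I.2
    have hmvt : ‖φ t₁ - φ 0‖ ≤ Q * ‖t₁ - 0‖ := by
      apply Convex.norm_image_sub_le_of_norm_hasDerivWithin_le
        (f' := fun t => -(A (φ t)))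
        (fun u hu => ((hφ' u (hsub hu)).hasDerivWithinAt))
        (fun u hu => by rw [norm_neg]; exact hAle _ (hKmem u hu))
        (convex_Icc _ _) (Set.left_mem_Icc.2 ht₁pos.le) (Set.right_mem_Icc.2 ht₁pos.le)
    rw [hφ0, sub_zero, Real.norm_eq_abs, abs_of_pos ht₁pos] at hmvt
    have : Q * t₁ ≤ Q * T := mul_le_mul_of_nonneg_left ht₁I.2 hQpos.le
    nlinarith
  -- flow distance bound
  have hφdist : ∀ t ∈ Set.Icc (0:ℝ) T, ‖φ t - θ₀‖ ≤ Q * t := by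
    intro t ht
    have hmvt : ‖φ t - φ 0‖ ≤ Q * ‖t - 0‖ := by
      apply Convex.norm_image_sub_le_of_norm_hasDerivWithin_le
        (f' := fun u => -(A (φ u)))
        (fun u hu => ((hφ' u hu).hasDerivWithinAt))
        (fun u hu => by rw [norm_neg]; exact hAle _ (hφK u hu))
        (convex_Icc _ _) (Set.left_mem_Icc.2 hT0.le) ht
    rwa [hφ0, sub_zero, Real.norm_eq_abs, abs_of_nonneg ht.1] at hmvt
  -- the comparison function ψ
  set ψ : ℝ → EuclideanSpace ℝ (Fin D) := fun t => φ t - θ₀ + t • A θ₀ with hψdef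
  have hψ' : ∀ t ∈ Set.Icc (0:ℝ) T, HasDerivAt ψ (-(A (φ t)) + A θ₀) t := by
    intro t ht
    have h1 : HasDerivAt (fun t => φ t - θ₀) (-(A (φ t))) t := (hφ' t ht).sub_const θ₀
    have h2 : HasDerivAt (fun t : ℝ => t • A θ₀) ((1:ℝ) • A θ₀) t :=
      (hasDerivAt_id t).smul_const (A θ₀)
    have h3 := h1.add h2
    rw [one_smul] at h3
    exact h3
  have hψbound : ∀ t ∈ Set.Icc (0:ℝ) T, ‖-(A (φ t)) + A θ₀‖ ≤ Q * (Q * T) := by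
    intro t ht
    have : ‖-(A (φ t)) + A θ₀‖ = ‖A θ₀ - A (φ t)‖ := by rw [neg_add_eq_sub]
    rw [this, norm_sub_rev]
    calc ‖A (φ t) - A θ₀‖ ≤ Q * ‖φ t - θ₀‖ := hAlip θ₀ hθ₀K (φ t) (hφK t ht)
    _ ≤ Q * (Q * t) := mul_le_mul_of_nonneg_left (hφdist t ht) hQpos.le
    _ ≤ Q * (Q * T) := by
        have h5 : Q * Q * t ≤ Q * Q * T := mul_le_mul_of_nonneg_left ht.2 (by positivity)
        nlinarith [h5]
  have hψmvt : ‖ψ T - ψ 0‖ ≤ (Q * (Q * T)) * ‖T - 0‖ := by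
    apply Convex.norm_image_sub_le_of_norm_hasDerivWithin_le
      (f' := fun t => -(A (φ t)) + A θ₀)
      (fun u hu => (hψ' u hu).hasDerivWithinAt)
      (fun u hu => hψbound u hu)
      (convex_Icc _ _) (Set.left_mem_Icc.2 hT0.le) (Set.right_mem_Icc.2 hT0.le)
  have hψ0 : ψ 0 = 0 := by simp [hψdef, hφ0]
  have hψT : ‖φ T - θ₀ + T • A θ₀‖ ≤ Q^2 * T^2 := by
    rw [hψ0, sub_zero] at hψmvt
    have : ‖T - 0‖ = T := by rw [sub_zero, Real.norm_eq_abs, abs_of_pos hT0]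
    rw [this] at hψmvt
    calc ‖φ T - θ₀ + T • A θ₀‖ = ‖ψ T‖ := rfl
    _ ≤ (Q * (Q * T)) * T := hψmvt
    _ = Q^2 * T^2 := by ring
  -- the SGD side
  have hsgd : ‖θ n - θ₀ + ∑ μ ∈ Finset.range n, h • G μ θ₀‖ ≤ Q^2 * T^2 := by
    have htel : θ n - θ₀ = -∑ μ ∈ Finset.range n, h • G μ (θ μ) := by
      rw [hθdef, sgdIter_eq_sub_sum n]; abel
    have : θ n - θ₀ + ∑ μ ∈ Finset.range n, h • G μ θ₀
        = ∑ μ ∈ Finset.range n, (h • G μ θ₀ - h • G μ (θ μ)) := by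
      rw [htel, Finset.sum_sub_distrib]; abel
    rw [this]
    calc ‖∑ μ ∈ Finset.range n, (h • G μ θ₀ - h • G μ (θ μ))‖
        ≤ ∑ μ ∈ Finset.range n, ‖h • G μ θ₀ - h • G μ (θ μ)‖ := norm_sum_le _ _
    _ ≤ ∑ μ ∈ Finset.range n, h * (Q * ((n:ℝ) * (h * Q))) := by
        apply Finset.sum_le_sum
        intro μ hμ
        have hμn := Finset.mem_range.1 hμ
        obtain ⟨hb, hbK⟩ := hθbound μ hμn.le
        rw [← smul_sub, norm_smul, Real.norm_eq_abs, abs_of_pos hh0]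
        apply mul_le_mul_of_nonneg_left _ hh0.le
        calc ‖G μ θ₀ - G μ (θ μ)‖ = ‖G μ (θ μ) - G μ θ₀‖ := norm_sub_rev _ _
        _ ≤ Q * ‖θ μ - θ₀‖ := hGlip μ hμn θ₀ hθ₀K (θ μ) hbK
        _ ≤ Q * ((μ:ℝ) * (h * Q)) := mul_le_mul_of_nonneg_left hb hQpos.le
        _ ≤ Q * ((n:ℝ) * (h * Q)) := by
            apply mul_le_mul_of_nonneg_left _ hQpos.le
            apply mul_le_mul_of_nonneg_right _ (by positivity)
            exact_mod_cast hμn.le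
    _ = (n:ℝ) * (h * (Q * ((n:ℝ) * (h * Q)))) := by
        rw [Finset.sum_const, Finset.card_range, nsmul_eq_mul]
    _ = Q^2 * T^2 := by rw [hT]; ring
  -- combine
  have hkey : T • A θ₀ = ∑ μ ∈ Finset.range n, h • G μ θ₀ := by
    have h5 := gradient_avgLoss hE θ₀
    show T • gradient (avgLoss n E) θ₀ = ∑ μ ∈ Finset.range n, h • gradient (E μ) θ₀
    rw [h5, smul_smul, Finset.smul_sum]
    have h6 : T * (1/(n:ℝ)) = h := by rw [hT]; field_simp
    rw [h6]
  have hdecomp : φ T - θ n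
      = (φ T - θ₀ + T • A θ₀) - (θ n - θ₀ + ∑ μ ∈ Finset.range n, h • G μ θ₀) := by
    rw [hkey]; abel
  calc ‖φ T - θ n‖
      ≤ ‖φ T - θ₀ + T • A θ₀‖ + ‖θ n - θ₀ + ∑ μ ∈ Finset.range n, h • G μ θ₀‖ := by
        rw [hdecomp]; exact norm_sub_le _ _
  _ ≤ Q^2 * T^2 + Q^2 * T^2 := add_le_add hψT hsgd
  _ = 2 * Q^2 * n^2 * h^2 := by rw [hT]; ring
end

section
/- Let E : ℝ^D → ℝ be smooth, θ₀ ∈ ℝ^D, and let f₁ : ℝ^D → ℝ^D be continuously differentiable. Suppose there exist C > 0 and h₀ > 0 such that for every h ∈ (0, h₀) there is a solution φ_h : [0, h] → ℝ^D of φ′(t) = −∇E(φ(t)) + h f₁(φ(t)) with φ_h(0) = θ₀ satisfying ‖φ_h(h) − (θ₀ − h∇E(θ₀))‖ ≤ C h³. Then necessarily f₁(θ₀) = −½ ∇²E(θ₀)[∇E(θ₀)]; i.e. backward error analysis uniquely determines the value of the first-order correction of the modified flow at the initial parameters. -/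
open Set Metric Filter Topology

/-- Mean value inequality on `[0, a]` with a constant bound. -/
lemma bea_mvt {V : Type*} [NormedAddCommGroup V] [NormedSpace ℝ V]
    {f f' : ℝ → V} {a C : ℝ} (ha : 0 ≤ a)
    (hf : ∀ t ∈ Set.Icc (0 : ℝ) a, HasDerivAt f (f' t) t)
    (hb : ∀ t ∈ Set.Icc (0 : ℝ) a, ‖f' t‖ ≤ C) :
    ‖f a - f 0‖ ≤ C * a := by
  have := Convex.norm_image_sub_le_of_norm_hasDerivWithin_le
    (f := f) (f' := f') (s := Set.Icc (0 : ℝ) a)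
    (fun t ht => (hf t ht).hasDerivWithinAt) hb (convex_Icc 0 a)
    (Set.left_mem_Icc.2 ha) (Set.right_mem_Icc.2 ha)
  simpa [Real.norm_eq_abs, abs_of_nonneg ha] using this

set_option maxHeartbeats 1600000 in
/-- Backward error analysis uniquely determines the value at `θ₀` of the
first-order correction of a modified flow matching one gradient descent step to
order `O(h³)`: necessarily `f₁(θ₀) = −½ ∇²E(θ₀)[∇E(θ₀)]`. -/
theorem bea_first_correction_unique {D : ℕ}
    (E : EuclideanSpace ℝ (Fin D) → ℝ) (hE : ContDiff ℝ (⊤ : ℕ∞) E)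
    (θ₀ : EuclideanSpace ℝ (Fin D))
    (f₁ : EuclideanSpace ℝ (Fin D) → EuclideanSpace ℝ (Fin D))
    (hf₁ : ContDiff ℝ 1 f₁)
    (hyp : ∃ C > (0 : ℝ), ∃ h₀ > (0 : ℝ), ∀ h ∈ Set.Ioo (0 : ℝ) h₀,
      ∃ φ : ℝ → EuclideanSpace ℝ (Fin D),
        φ 0 = θ₀ ∧
        (∀ t ∈ Set.Icc (0 : ℝ) h,
          HasDerivAt φ (-(gradient E (φ t)) + h • f₁ (φ t)) t) ∧
        ‖φ h - (θ₀ - h • gradient E θ₀)‖ ≤ C * h ^ 3) :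
    f₁ θ₀ = -((1 / 2 : ℝ) • fderiv ℝ (gradient E) θ₀ (gradient E θ₀)) := by
  obtain ⟨C, hC, h₀, hh₀, hyp⟩ := hyp
  -- the gradient of a smooth function is smooth
  have hgradC : ContDiff ℝ (⊤ : ℕ∞) (gradient E) := by
    have h1 : ContDiff ℝ (⊤ : ℕ∞) (fderiv ℝ E) := hE.fderiv_right (by simp)
    exact (InnerProductSpace.toDual ℝ (EuclideanSpace ℝ (Fin D))).symm.contDiff.comp h1
  have hgdiff : DifferentiableAt ℝ (gradient E) θ₀ :=
    (hgradC.differentiable (by simp)).differentiableAt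
  set H : EuclideanSpace ℝ (Fin D) →L[ℝ] EuclideanSpace ℝ (Fin D) :=
    fderiv ℝ (gradient E) θ₀ with hHdef
  set G : EuclideanSpace ℝ (Fin D) → EuclideanSpace ℝ (Fin D) :=
    fun x => -(gradient E x) with hGdef
  set A : EuclideanSpace ℝ (Fin D) →L[ℝ] EuclideanSpace ℝ (Fin D) := -H with hAdef
  have hGd : HasFDerivAt G A θ₀ := hgdiff.hasFDerivAt.neg
  have hGcont : Continuous G := hgradC.continuous.neg
  have hf₁c : Continuous f₁ := hf₁.continuous
  -- bounds on a compact ball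
  obtain ⟨M₁, hM₁⟩ :=
    (isCompact_closedBall θ₀ 1).exists_bound_of_continuousOn hGcont.continuousOn
  obtain ⟨M₂, hM₂⟩ :=
    (isCompact_closedBall θ₀ 1).exists_bound_of_continuousOn hf₁c.continuousOn
  set M : ℝ := |M₁| + |M₂| + 1 with hMdef
  have hMpos : 0 < M := by positivity
  have hGbd : ∀ x ∈ closedBall θ₀ 1, ‖G x‖ ≤ |M₁| :=
    fun x hx => (hM₁ x hx).trans (le_abs_self _)
  have hfbd : ∀ x ∈ closedBall θ₀ 1, ‖f₁ x‖ ≤ |M₂| :=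
    fun x hx => (hM₂ x hx).trans (le_abs_self _)
  have hfbd' : ∀ x ∈ closedBall θ₀ 1, ‖f₁ x‖ ≤ M := by
    intro x hx
    have := hfbd x hx
    have h0 : (0:ℝ) ≤ |M₁| := abs_nonneg _
    simp only [hMdef]; linarith
  have hfield : ∀ h : ℝ, 0 < h → h ≤ 1 → ∀ x ∈ closedBall θ₀ 1,
      ‖G x + h • f₁ x‖ ≤ M := by
    intro h hh h1 x hx
    have := norm_add_le (G x) (h • f₁ x)
    have h2 : ‖h • f₁ x‖ = h * ‖f₁ x‖ := by
      rw [norm_smul, Real.norm_eq_abs, abs_of_pos hh]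
    have h3 := hGbd x hx
    have h4 := hfbd x hx
    have h5 : h * ‖f₁ x‖ ≤ 1 * |M₂| := by
      apply mul_le_mul h1 h4 (norm_nonneg _) zero_le_one
    simp only [hMdef]; rw [h2] at this; linarith
  clear_value M
  set c₁ : ℝ := (2 + ‖A‖) * M with hc₁def
  have hc₁pos : 0 < c₁ := by
    rw [hc₁def]
    have : (0:ℝ) ≤ ‖A‖ := norm_nonneg _
    nlinarith
  clear_value c₁
  set v : EuclideanSpace ℝ (Fin D) := (1/2 : ℝ) • (A (G θ₀)) + f₁ θ₀ with hvdef
  clear_value v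
  -- main estimate: ‖v‖ ≤ ε' for every ε' > 0
  have hmain : ∀ ε' > (0:ℝ), ‖v‖ ≤ ε' := by
    intro ε' hε'
    set ε : ℝ := min 1 (ε' / (2 * (M + 1))) with hεdef
    have hεpos : 0 < ε := lt_min one_pos (div_pos hε' (by linarith))
    have hε1 : ε ≤ 1 := min_le_left _ _
    have hε2 : ε ≤ ε' / (2 * (M + 1)) := min_le_right _ _
    clear_value ε
    -- δ from differentiability of G at θ₀ and continuity of f₁ at θ₀
    obtain ⟨δ₁, hδ₁pos, hδ₁⟩ := Metric.eventually_nhds_iff.mp (hGd.isLittleO.def hεpos)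
    obtain ⟨δ₂, hδ₂pos, hδ₂⟩ := Metric.continuousAt_iff.mp hf₁c.continuousAt ε hεpos
    set δ : ℝ := min 1 (min (δ₁ / 2) (δ₂ / 2)) with hδdef
    have hδpos : 0 < δ := lt_min one_pos (lt_min (by linarith) (by linarith))
    have hδ1 : δ ≤ 1 := min_le_left _ _
    have hδd₁ : δ ≤ δ₁ / 2 := (min_le_right _ _).trans (min_le_left _ _)
    have hδd₂ : δ ≤ δ₂ / 2 := (min_le_right _ _).trans (min_le_right _ _)
    clear_value δ
    have hGεδ : ∀ x : EuclideanSpace ℝ (Fin D), ‖x - θ₀‖ ≤ δ →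
        ‖G x - G θ₀ - A (x - θ₀)‖ ≤ ε * ‖x - θ₀‖ := by
      intro x hx
      have hdist : dist x θ₀ < δ₁ := by
        rw [dist_eq_norm]; linarith
      exact hδ₁ hdist
    have hfεδ : ∀ x : EuclideanSpace ℝ (Fin D), ‖x - θ₀‖ ≤ δ →
        ‖f₁ x - f₁ θ₀‖ ≤ ε := by
      intro x hx
      have hdist : dist x θ₀ < δ₂ := by rw [dist_eq_norm]; linarith
      have := hδ₂ hdist
      rw [dist_eq_norm] at this; exact this.le
    -- choose h
    set hb : ℝ := min h₀ (min 1 (min (δ / (4 * M)) (ε' / (2 * (C + ‖A‖ * c₁ + 1))))) with hbdef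
    have hApos : (0:ℝ) < C + ‖A‖ * c₁ + 1 := by
      have h1 := norm_nonneg A
      have h2 := mul_nonneg (norm_nonneg A) hc₁pos.le
      linarith
    have hbpos : 0 < hb := by
      refine lt_min hh₀ (lt_min one_pos (lt_min
        (div_pos hδpos (by linarith)) (div_pos hε' (by linarith))))
    set h : ℝ := hb / 2 with hhdef
    have hpos : 0 < h := by positivity
    have hlt : h < h₀ := by
      have : hb ≤ h₀ := min_le_left _ _
      simp only [hhdef]; linarith
    have h1 : h ≤ 1 := by
      have : hb ≤ 1 := (min_le_right _ _).trans (min_le_left _ _)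
      simp only [hhdef]; linarith
    have hδM : h ≤ δ / (4 * M) := by
      have : hb ≤ δ / (4 * M) :=
        (min_le_right _ _).trans ((min_le_right _ _).trans (min_le_left _ _))
      simp only [hhdef]; linarith
    have hεb : h ≤ ε' / (2 * (C + ‖A‖ * c₁ + 1)) := by
      have : hb ≤ ε' / (2 * (C + ‖A‖ * c₁ + 1)) :=
        (min_le_right _ _).trans ((min_le_right _ _).trans (min_le_right _ _))
      simp only [hhdef]; linarith
    have hMh : M * h ≤ δ / 4 := by
      have := mul_le_mul_of_nonneg_left hδM hMpos.le
      have h4 : M * (δ / (4 * M)) = δ / 4 := by field_simp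
      linarith [h4 ▸ this]
    clear_value hb h
    obtain ⟨φ, hφ0, hφ', hφend⟩ := hyp h ⟨hpos, hlt⟩
    have hφ'' : ∀ t ∈ Set.Icc (0:ℝ) h, HasDerivAt φ (G (φ t) + h • f₁ (φ t)) t :=
      fun t ht => hφ' t ht
    have hφcont : ∀ t ∈ Set.Icc (0:ℝ) h, ContinuousAt φ t :=
      fun t ht => (hφ'' t ht).continuousAt
    -- bootstrap: the solution stays within δ of θ₀
    have key : ∀ t ∈ Set.Icc (0:ℝ) h, ‖φ t - θ₀‖ < δ := by
      by_contra hcon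
      push_neg at hcon
      obtain ⟨t₁, ht₁, ht₁'⟩ := hcon
      set S : Set ℝ := {t | t ∈ Set.Icc (0:ℝ) h ∧ δ ≤ ‖φ t - θ₀‖} with hSdef
      have hφconts : ContinuousOn (fun t => ‖φ t - θ₀‖) (Set.Icc (0:ℝ) h) := by
        apply ContinuousOn.norm
        exact ContinuousOn.sub (fun t ht => (hφcont t ht).continuousWithinAt)
          continuousOn_const
      have hScl : IsClosed S := by
        have hs : S = Set.Icc (0:ℝ) h ∩ (fun t => ‖φ t - θ₀‖) ⁻¹' Set.Ici δ := by
          ext t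
          simp only [hSdef, Set.mem_setOf_eq, Set.mem_inter_iff, Set.mem_preimage,
            Set.mem_Ici]
        rw [hs]
        exact hφconts.preimage_isClosed_of_isClosed isClosed_Icc isClosed_Ici
      have hSne : S.Nonempty := ⟨t₁, ht₁, ht₁'⟩
      have hSbdd : BddBelow S := ⟨0, fun s hs => hs.1.1⟩
      set t₀ : ℝ := sInf S with ht₀def
      have hmem : t₀ ∈ S := hScl.csInf_mem hSne hSbdd
      have ht₀Icc : t₀ ∈ Set.Icc (0:ℝ) h := hmem.1
      have ht₀pos : 0 < t₀ := by
        rcases eq_or_lt_of_le ht₀Icc.1 with h0 | h0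
        · exfalso
          have := hmem.2
          rw [← h0, hφ0, sub_self, norm_zero] at this
          linarith
        · exact h0
      have hlt' : ∀ s : ℝ, 0 ≤ s → s < t₀ → ‖φ s - θ₀‖ < δ := by
        intro s hs0 hst
        by_contra hge
        push_neg at hge
        have hsS : s ∈ S := ⟨⟨hs0, hst.le.trans ht₀Icc.2⟩, hge⟩
        exact absurd (csInf_le hSbdd hsS) (not_le.2 hst)
      have hMbd : ∀ s : ℝ, 0 ≤ s → s < t₀ → ‖φ s - θ₀‖ ≤ M * s := by
        intro s hs0 hst
        have hsh : s ≤ h := hst.le.trans ht₀Icc.2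
        have := bea_mvt (f := φ) (f' := fun u => G (φ u) + h • f₁ (φ u)) hs0
          (fun u hu => hφ'' u ⟨hu.1, hu.2.trans hsh⟩)
          (fun u hu => by
            apply hfield h hpos h1
            rw [mem_closedBall, dist_eq_norm]
            have := hlt' u hu.1 (lt_of_le_of_lt hu.2 hst)
            linarith)
        rw [hφ0] at this
        exact this
      have hcontt₀ : ContinuousAt φ t₀ := hφcont t₀ ht₀Icc
      have hlim : Tendsto (fun s => ‖φ s - θ₀‖) (𝓝[<] t₀) (𝓝 ‖φ t₀ - θ₀‖) := by
        apply Tendsto.norm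
        exact Tendsto.sub (hcontt₀.continuousWithinAt.tendsto) tendsto_const_nhds
      have hev : ∀ᶠ s in 𝓝[<] t₀, ‖φ s - θ₀‖ ≤ M * t₀ := by
        filter_upwards [Ioo_mem_nhdsLT ht₀pos] with s hs
        have := hMbd s hs.1.le hs.2
        have := mul_le_mul_of_nonneg_left hs.2.le hMpos.le
        linarith
      have hfin : ‖φ t₀ - θ₀‖ ≤ M * t₀ := le_of_tendsto hlim hev
      have hMt₀ : M * t₀ ≤ M * h := mul_le_mul_of_nonneg_left ht₀Icc.2 hMpos.le
      have := hmem.2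
      linarith
    have hball : ∀ t ∈ Set.Icc (0:ℝ) h, ‖φ t - θ₀‖ ≤ M * t := by
      intro t ht
      have := bea_mvt (f := φ) (f' := fun u => G (φ u) + h • f₁ (φ u)) ht.1
        (fun u hu => hφ'' u ⟨hu.1, hu.2.trans ht.2⟩)
        (fun u hu => by
          apply hfield h hpos h1
          rw [mem_closedBall, dist_eq_norm]
          have := key u ⟨hu.1, hu.2.trans ht.2⟩
          linarith)
      rw [hφ0] at this
      exact this
    -- first-order estimate
    set w : EuclideanSpace ℝ (Fin D) := G θ₀ with hwdef
    have hw' : w = -(gradient E θ₀) := rfl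
    clear_value w
    have hψ : ∀ t ∈ Set.Icc (0:ℝ) h, ‖φ t - θ₀ - t • w‖ ≤ c₁ * h * t := by
      intro t ht
      have hd : ∀ u ∈ Set.Icc (0:ℝ) t,
          HasDerivAt (fun s => φ s - θ₀ - s • w) (G (φ u) + h • f₁ (φ u) - w) u := by
        intro u hu
        have hA1 := (hφ'' u ⟨hu.1, hu.2.trans ht.2⟩).sub_const θ₀
        have hA2 : HasDerivAt (fun s : ℝ => s • w) w u := by
          simpa using (hasDerivAt_id u).smul_const w
        exact hA1.sub hA2
      have hbnd : ∀ u ∈ Set.Icc (0:ℝ) t, ‖G (φ u) + h • f₁ (φ u) - w‖ ≤ c₁ * h := by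
        intro u hu
        have hu' : u ∈ Set.Icc (0:ℝ) h := ⟨hu.1, hu.2.trans ht.2⟩
        have hb1 : ‖φ u - θ₀‖ ≤ M * u := hball u hu'
        have hb1' : ‖φ u - θ₀‖ ≤ M * h :=
          hb1.trans (mul_le_mul_of_nonneg_left hu'.2 hMpos.le)
        have hδu : ‖φ u - θ₀‖ ≤ δ := (key u hu').le
        have heq : G (φ u) + h • f₁ (φ u) - w =
            (G (φ u) - w - A (φ u - θ₀)) + (A (φ u - θ₀) + h • f₁ (φ u)) := by abel
        rw [heq]
        have e1 : ‖G (φ u) - w - A (φ u - θ₀)‖ ≤ ε * ‖φ u - θ₀‖ := hGεδ _ hδu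
        have e2 : ‖A (φ u - θ₀)‖ ≤ ‖A‖ * ‖φ u - θ₀‖ := A.le_opNorm _
        have e3 : ‖h • f₁ (φ u)‖ ≤ h * M := by
          rw [norm_smul, Real.norm_eq_abs, abs_of_pos hpos]
          have := hfbd' (φ u) (by rw [mem_closedBall, dist_eq_norm]; linarith)
          exact mul_le_mul_of_nonneg_left this hpos.le
        have n1 := norm_add_le (G (φ u) - w - A (φ u - θ₀)) (A (φ u - θ₀) + h • f₁ (φ u))
        have n2 := norm_add_le (A (φ u - θ₀)) (h • f₁ (φ u))
        have e1' : ε * ‖φ u - θ₀‖ ≤ ‖φ u - θ₀‖ :=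
          mul_le_of_le_one_left (norm_nonneg _) hε1
        have e2' : ‖A‖ * ‖φ u - θ₀‖ ≤ ‖A‖ * (M * h) :=
          mul_le_mul_of_nonneg_left hb1' (norm_nonneg _)
        have hc : c₁ * h = 2 * (M * h) + ‖A‖ * (M * h) := by rw [hc₁def]; ring
        rw [hc]
        linarith
      have := bea_mvt (a := t) ht.1 hd hbnd
      rw [hφ0] at this
      simpa [mul_assoc] using this
    -- second-order estimate
    set c₂ : ℝ := (M + 1) * ε * h + ‖A‖ * c₁ * h^2 with hc₂def
    clear_value c₂
    have hχ : ‖φ h - θ₀ - h • w - (h^2/2) • (A w) - (h*h) • f₁ θ₀‖ ≤ c₂ * h := by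
      have hd : ∀ u ∈ Set.Icc (0:ℝ) h,
          HasDerivAt (fun s => φ s - θ₀ - s • w - (s^2/2) • (A w) - (s*h) • f₁ θ₀)
            (G (φ u) + h • f₁ (φ u) - w - u • (A w) - h • f₁ θ₀) u := by
        intro u hu
        have hA1 := (hφ'' u hu).sub_const θ₀
        have hA2 : HasDerivAt (fun s : ℝ => s • w) w u := by
          simpa using (hasDerivAt_id u).smul_const w
        have hA3 : HasDerivAt (fun s : ℝ => (s^2/2) • (A w)) (u • (A w)) u := by
          have hp := ((hasDerivAt_pow 2 u).div_const 2).smul_const (A w)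
          exact hp.congr_deriv (by norm_num)
        have hA4 : HasDerivAt (fun s : ℝ => (s*h) • f₁ θ₀) (h • f₁ θ₀) u := by
          simpa using ((hasDerivAt_id u).mul_const h).smul_const (f₁ θ₀)
        exact ((hA1.sub hA2).sub hA3).sub hA4
      have hbnd : ∀ u ∈ Set.Icc (0:ℝ) h,
          ‖G (φ u) + h • f₁ (φ u) - w - u • (A w) - h • f₁ θ₀‖ ≤ c₂ := by
        intro u hu
        have hb1 : ‖φ u - θ₀‖ ≤ M * u := hball u hu
        have hb1' : ‖φ u - θ₀‖ ≤ M * h :=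
          hb1.trans (mul_le_mul_of_nonneg_left hu.2 hMpos.le)
        have hδu : ‖φ u - θ₀‖ ≤ δ := (key u hu).le
        have hψu : ‖φ u - θ₀ - u • w‖ ≤ c₁ * h * u := hψ u hu
        have hψu' : ‖φ u - θ₀ - u • w‖ ≤ c₁ * h * h := by
          have := mul_le_mul_of_nonneg_left hu.2 (mul_nonneg hc₁pos.le hpos.le)
          calc ‖φ u - θ₀ - u • w‖ ≤ c₁ * h * u := hψu
            _ ≤ c₁ * h * h := this
        have hAux : A (φ u - θ₀ - u • w) = A (φ u - θ₀) - u • (A w) := by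
          rw [map_sub, map_smul]
        have heq : G (φ u) + h • f₁ (φ u) - w - u • (A w) - h • f₁ θ₀ =
            (G (φ u) - w - A (φ u - θ₀)) + A (φ u - θ₀ - u • w)
              + h • (f₁ (φ u) - f₁ θ₀) := by
          rw [hAux, smul_sub]
          abel
        rw [heq]
        have e1 : ‖G (φ u) - w - A (φ u - θ₀)‖ ≤ ε * ‖φ u - θ₀‖ := hGεδ _ hδu
        have e1' : ε * ‖φ u - θ₀‖ ≤ ε * (M * h) :=
          mul_le_mul_of_nonneg_left hb1' hεpos.le
        have e2 : ‖A (φ u - θ₀ - u • w)‖ ≤ ‖A‖ * (c₁ * h * h) :=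
          (A.le_opNorm _).trans (mul_le_mul_of_nonneg_left hψu' (norm_nonneg _))
        have e3 : ‖h • (f₁ (φ u) - f₁ θ₀)‖ ≤ h * ε := by
          rw [norm_smul, Real.norm_eq_abs, abs_of_pos hpos]
          exact mul_le_mul_of_nonneg_left (hfεδ _ hδu) hpos.le
        have n1 := norm_add_le ((G (φ u) - w - A (φ u - θ₀)) + A (φ u - θ₀ - u • w))
          (h • (f₁ (φ u) - f₁ θ₀))
        have n2 := norm_add_le (G (φ u) - w - A (φ u - θ₀)) (A (φ u - θ₀ - u • w))
        have hc : c₂ = ε * (M * h) + ‖A‖ * (c₁ * h * h) + h * ε := by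
          rw [hc₂def]; ring
        rw [hc]
        linarith
      have := bea_mvt (a := h) hpos.le hd hbnd
      rw [hφ0] at this
      simpa using this
    -- assemble
    have hveq : (h^2) • v = (φ h - (θ₀ - h • gradient E θ₀))
        - (φ h - θ₀ - h • w - (h^2/2) • (A w) - (h*h) • f₁ θ₀) := by
      rw [hvdef, hw']
      module
    have hnorm : h^2 * ‖v‖ ≤ C * h^3 + c₂ * h := by
      have := (hveq ▸ (norm_sub_le (φ h - (θ₀ - h • gradient E θ₀))
        (φ h - θ₀ - h • w - (h^2/2) • (A w) - (h*h) • f₁ θ₀))).trans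
        (add_le_add hφend hχ)
      rw [norm_smul, Real.norm_eq_abs, abs_of_pos (pow_pos hpos 2)] at this
      exact this
    have hfinal : ‖v‖ ≤ (C + ‖A‖ * c₁) * h + (M + 1) * ε := by
      have hh2 : (0:ℝ) < h^2 := pow_pos hpos 2
      rw [hc₂def] at hnorm
      have hXeq : C * h^3 + ((M + 1) * ε * h + ‖A‖ * c₁ * h^2) * h
          = h^2 * ((C + ‖A‖ * c₁) * h + (M + 1) * ε) := by ring
      rw [hXeq] at hnorm
      exact le_of_mul_le_mul_left hnorm hh2
    have haux : ∀ P : ℝ, 0 < P → P * (ε' / (2 * P)) = ε' / 2 := by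
      intro P hP
      field_simp [hP.ne']
    have hb1 : (C + ‖A‖ * c₁) * h ≤ ε' / 2 := by
      have h1' := mul_le_mul_of_nonneg_left hεb hApos.le
      have heq2 := haux _ hApos
      nlinarith [hpos]
    have hb2 : (M + 1) * ε ≤ ε' / 2 := by
      have h2' := mul_le_mul_of_nonneg_left hε2 (by linarith : (0:ℝ) ≤ M + 1)
      have heq2 := haux _ (by linarith : (0:ℝ) < M + 1)
      linarith [heq2 ▸ h2']
    linarith
  -- conclude v = 0
  have hvnorm : ‖v‖ ≤ 0 := le_of_forall_pos_le_add (by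
    intro ε hε
    simpa using hmain ε hε)
  have hv0 : v = 0 := by
    rwa [← norm_le_zero_iff]
  have hAw : A (G θ₀) = H (gradient E θ₀) := by
    simp [hAdef, hGdef, ContinuousLinearMap.neg_apply, map_neg]
  have : f₁ θ₀ = v - (1/2 : ℝ) • (A (G θ₀)) := by
    rw [hvdef]; abel
  rw [hv0, hAw] at this
  simpa using this
end
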